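/- Let R be a commutative ring and g ≥ 0. The group Aut(X^{#2g+1}) of R-linear automorphisms of R^{2g+1} preserving λ_{2g+1} and ∂_{2g+1} is isomorphic, as a group, to the symplectic group Sp_{2g}(R). -/

import Mathlib

/-- The bilinear form of the formed space with boundary `X^{#n}`. -/
def lamX (R : Type) [CommRing R] (n : ℕ) (x y : Fin n → R) : R :=
  ∑ i : Fin n, ∑ j : Fin n, (if (i : ℕ) < (j : ℕ) then x i * y j
    else if (j : ℕ) < (i : ℕ) then -(x i * y j) else 0)

/-- The boundary map of `X^{#n}`. -/
def bdX (R : Type) [CommRing R] (n : ℕ) (x : Fin n → R) : R := ∑ i, x i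

/-- The standard symplectic form on `R^n` (interleaved hyperbolic pairs), i.e. the form of the
hyperbolic formed space `H^{⊕ g}` when `n = 2g`. -/
def omegaH (R : Type) [CommRing R] (n : ℕ) (x y : Fin n → R) : R :=
  ∑ i : Fin n, ∑ j : Fin n, (if (i : ℕ) % 2 = 0 ∧ (j : ℕ) = (i : ℕ) + 1 then x i * y j
    else if (j : ℕ) % 2 = 0 ∧ (i : ℕ) = (j : ℕ) + 1 then -(x i * y j) else 0)

/-- The symplectic group `Sp_n(R)`, as the subgroup of linear automorphisms of `R^n`
preserving the standard symplectic form. -/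
def SpGrp (R : Type) [CommRing R] (n : ℕ) : Subgroup ((Fin n → R) ≃ₗ[R] (Fin n → R)) where
  carrier := {A | ∀ x y, omegaH R n (A x) (A y) = omegaH R n x y}
  one_mem' := by intro x y; rfl
  mul_mem' := by
    intro a b ha hb x y
    show omegaH R n (a (b x)) (a (b y)) = omegaH R n x y
    rw [ha, hb]
  inv_mem' := by
    intro a ha x y
    show omegaH R n (a.symm x) (a.symm y) = omegaH R n x y
    conv_rhs => rw [← a.apply_symm_apply x, ← a.apply_symm_apply y]
    exact (ha _ _).symm

/-- The automorphism group of the formed space with boundary `X^{#n}`, as the subgroup of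
linear automorphisms of `R^n` preserving `λ_n` and `∂_n`. -/
def AutX (R : Type) [CommRing R] (n : ℕ) : Subgroup ((Fin n → R) ≃ₗ[R] (Fin n → R)) where
  carrier := {A | (∀ x y, lamX R n (A x) (A y) = lamX R n x y) ∧
    ∀ x, bdX R n (A x) = bdX R n x}
  one_mem' := ⟨fun _ _ => rfl, fun _ => rfl⟩
  mul_mem' := by
    intro a b ha hb
    refine ⟨fun x y => ?_, fun x => ?_⟩
    · show lamX R n (a (b x)) (a (b y)) = lamX R n x y
      rw [ha.1, hb.1]
    · show bdX R n (a (b x)) = bdX R n x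
      rw [ha.2, hb.2]
  inv_mem' := by
    intro a ha
    refine ⟨fun x y => ?_, fun x => ?_⟩
    · show lamX R n (a.symm x) (a.symm y) = lamX R n x y
      conv_rhs => rw [← a.apply_symm_apply x, ← a.apply_symm_apply y]
      exact (ha.1 _ _).symm
    · show bdX R n (a.symm x) = bdX R n x
      conv_rhs => rw [← a.apply_symm_apply x]
      exact (ha.2 _).symm

/-!
Every vector of `R^{2g+1}` is `Φ x + c u` for unique `x ∈ R^{2g}`, `c ∈ R`, where
`u = (1, -1, 1, …, 1)` spans the radical of `λ_{2g+1}` and has `∂ u = 1`, and `Φ` maps the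
standard basis onto a symplectic basis of `ker ∂`. Under this splitting `λ` becomes `ω(x, x')`
and `∂` becomes `c`. An automorphism preserving both must fix `u` (the only radical vector of
boundary `1`) and preserve `ker ∂`, so it is `B ⊕ id` with `B` symplectic, and conversely.
-/

namespace LinearEquiv

variable {R M M' : Type*} [Semiring R] [AddCommMonoid M] [Module R M] [AddCommMonoid M']
  [Module R M']

def autCongr (e : M ≃ₗ[R] M') : (M ≃ₗ[R] M) ≃* (M' ≃ₗ[R] M') where
  toFun A := e.symm ≪≫ₗ A ≪≫ₗ e
  invFun B := e ≪≫ₗ B ≪≫ₗ e.symm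
  left_inv A := by ext; simp
  right_inv B := by ext; simp
  map_mul' A B := by ext; simp

@[simp]
theorem autCongr_symm_apply (e : M ≃ₗ[R] M') (A : M' ≃ₗ[R] M') (x : M) :
    (autCongr e).symm A x = e.symm (A (e x)) := rfl

variable (R M) in
def prodCongrReflHom : (M ≃ₗ[R] M) →* ((M × R) ≃ₗ[R] (M × R)) where
  toFun A := A.prodCongr (LinearEquiv.refl R R)
  map_one' := rfl
  map_mul' _ _ := rfl

@[simp]
theorem prodCongrReflHom_apply (A : M ≃ₗ[R] M) (p : M × R) :
    prodCongrReflHom R M A p = (A p.1, p.2) :=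
  rfl

theorem prodCongrReflHom_injective : Function.Injective (prodCongrReflHom R M) :=
  fun _ _ h => LinearEquiv.ext fun x => congrArg Prod.fst (LinearEquiv.congr_fun h (x, 0))

end LinearEquiv

section FormAut

variable {R M M' : Type*} [CommSemiring R] [AddCommMonoid M] [Module R M] [AddCommMonoid M']
  [Module R M']

def isometryGroup (B : M → M → R) : Subgroup (M ≃ₗ[R] M) where
  carrier := {A | ∀ x y, B (A x) (A y) = B x y}
  one_mem' _ _ := rfl
  mul_mem' ha hb x y := (ha _ _).trans (hb x y)
  inv_mem' {A} ha x y := by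
    simpa using (ha (A.symm x) (A.symm y)).symm

def formAutGroup (B : M → M → R) (f : M → R) : Subgroup (M ≃ₗ[R] M) where
  carrier := {A | (∀ x y, B (A x) (A y) = B x y) ∧ ∀ x, f (A x) = f x}
  one_mem' := ⟨fun _ _ => rfl, fun _ => rfl⟩
  mul_mem' ha hb := ⟨fun x y => (ha.1 _ _).trans (hb.1 x y), fun x => (ha.2 _).trans (hb.2 x)⟩
  inv_mem' {A} ha := ⟨fun x y => by simpa using (ha.1 (A.symm x) (A.symm y)).symm,
    fun x => by simpa using (ha.2 (A.symm x)).symm⟩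

@[simp]
theorem mem_formAutGroup {B : M → M → R} {f : M → R} {A : M ≃ₗ[R] M} :
    A ∈ formAutGroup B f ↔ (∀ x y, B (A x) (A y) = B x y) ∧ ∀ x, f (A x) = f x :=
  Iff.rfl

theorem map_autCongr_formAutGroup (e : M ≃ₗ[R] M') {B : M → M → R} {f : M → R}
    {B' : M' → M' → R} {f' : M' → R} (hB : ∀ x y, B' (e x) (e y) = B x y)
    (hf : ∀ x, f' (e x) = f x) :
    (formAutGroup B f).map (LinearEquiv.autCongr e : _ →* _) = formAutGroup B' f' := by
  rw [Subgroup.map_equiv_eq_comap_symm]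
  ext A
  simp only [Subgroup.mem_comap, mem_formAutGroup, MonoidHom.coe_coe,
    LinearEquiv.autCongr_symm_apply, ← hB, ← hf, LinearEquiv.apply_symm_apply]
  rw [e.surjective.forall₂, e.surjective.forall]

def formAutGroupCongr (e : M ≃ₗ[R] M') {B : M → M → R} {f : M → R}
    {B' : M' → M' → R} {f' : M' → R} (hB : ∀ x y, B' (e x) (e y) = B x y)
    (hf : ∀ x, f' (e x) = f x) : formAutGroup B f ≃* formAutGroup B' f' :=
  ((LinearEquiv.autCongr e).subgroupMap _).trans
    (MulEquiv.subgroupCongr (map_autCongr_formAutGroup e hB hf))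

variable {N : Type*} [AddCommMonoid N] [Module R N] {ω : LinearMap.BilinForm R N}

theorem apply_eq_of_mem_formAutGroup_prod (hω : ω.SeparatingLeft)
    {A : (N × R) ≃ₗ[R] (N × R)}
    (hA : A ∈ formAutGroup (fun p q : N × R => ω p.1 q.1) Prod.snd) (p : N × R) :
    A p = ((A (p.1, 0)).1, p.2) := by
  -- `A (0, 1)` lies in the radical, whose only element of boundary `1` is `(0, 1)`.
  have h01 : A (0, 1) = (0, 1) := by
    refine Prod.ext (hω _ fun y => ?_) (hA.2 (0, 1))
    simpa using hA.1 (0, 1) (A.symm (y, 0))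
  calc A p = A (p.1, 0) + p.2 • A (0, 1) := by rw [← map_smul, ← map_add]; simp
    _ = ((A (p.1, 0)).1, p.2) := by
      rw [h01]; ext <;> simp [show (A (p.1, 0)).2 = 0 from hA.2 (p.1, 0)]

theorem map_prodCongrReflHom_isometryGroup (hω : ω.SeparatingLeft) :
    (isometryGroup fun x y => ω x y).map (LinearEquiv.prodCongrReflHom R N) =
      formAutGroup (fun p q : N × R => ω p.1 q.1) Prod.snd := by
  ext A
  constructor
  · rintro ⟨B, hB, rfl⟩
    exact ⟨fun p q => hB p.1 q.1, fun p => rfl⟩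
  · intro hA
    have hA' : A.symm ∈ formAutGroup (fun p q : N × R => ω p.1 q.1) Prod.snd := inv_mem hA
    have hker : ∀ A ∈ formAutGroup (fun p q : N × R => ω p.1 q.1) Prod.snd, ∀ x : N,
        ((A (x, 0)).1, 0) = A (x, 0) := fun A hA x => Prod.ext rfl (hA.2 (x, 0)).symm
    refine ⟨LinearEquiv.ofLinearMap
      (LinearMap.fst R N R ∘ₗ A.toLinearMap ∘ₗ LinearMap.inl R N R)
      (LinearMap.fst R N R ∘ₗ A.symm.toLinearMap ∘ₗ LinearMap.inl R N R) ?_ ?_, ?_, ?_⟩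
    · ext x
      simp [hker _ hA' x]
    · ext x
      simp [hker _ hA x]
    · exact fun x y => hA.1 (x, 0) (y, 0)
    · ext p <;> simp [apply_eq_of_mem_formAutGroup_prod hω hA p]

noncomputable def isometryGroupEquivFormAutGroupProd (hω : ω.SeparatingLeft) :
    isometryGroup (fun x y => ω x y) ≃* formAutGroup (fun p q : N × R => ω p.1 q.1) Prod.snd :=
  ((isometryGroup _).equivMapOfInjective _ LinearEquiv.prodCongrReflHom_injective).trans
    (MulEquiv.subgroupCongr (map_prodCongrReflHom_isometryGroup hω))

end FormAut

namespace Matrix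

variable {R m n : Type*} [CommRing R] [Fintype m] [Fintype n] [DecidableEq m] [DecidableEq n]

/-- `(x, c) ↦ Φ *ᵥ x + c • u` is a left inverse, hence also a right inverse since the block
matrices involved are square. -/
def mulVecProdDotProductEquiv {Φ : Matrix m n R} {Ψ : Matrix n m R} {u v : m → R}
    (h : Φ * Ψ + vecMulVec u v = 1) (hcard : Fintype.card m = Fintype.card n + 1) :
    (m → R) ≃ₗ[R] (n → R) × R :=
  have hGF : fromCols Φ (replicateCol (Fin 1) u) * fromRows Ψ (replicateRow (Fin 1) v) = 1 := by
    rw [fromCols_mul_fromRows, ← h]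
    congr 1
    exact (vecMulVec_eq (Fin 1) u v).symm
  have hFG := (mul_eq_one_comm_of_card_eq m (n ⊕ Fin 1) R (by simp [hcard])).mp hGF
  (toLin'OfInv hGF hFG).trans <|
    (LinearEquiv.sumArrowLequivProdArrow n (Fin 1) R R).trans <|
      (LinearEquiv.refl R _).prodCongr (LinearEquiv.funUnique (Fin 1) R R)

@[simp]
theorem mulVecProdDotProductEquiv_apply {Φ : Matrix m n R} {Ψ : Matrix n m R} {u v : m → R}
    (h : Φ * Ψ + vecMulVec u v = 1) (hcard : Fintype.card m = Fintype.card n + 1) (y : m → R) :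
    mulVecProdDotProductEquiv h hcard y = (Ψ *ᵥ y, v ⬝ᵥ y) := by
  ext <;> simp [mulVecProdDotProductEquiv, mulVec]

end Matrix

section Coefficients

variable {R : Type*} [CommRing R]
open Finset

theorem Finset.sum_range_eq_ite_add_ite {M : Type*} [AddCommMonoid M] {N a b : ℕ}
    {f g h : ℕ → M}
    (hf : ∀ k, f k = (if k = a then g k else 0) + (if k = b then h k else 0)) :
    ∑ k ∈ range N, f k = (if a < N then g a else 0) + (if b < N then h b else 0) := by
  simp only [hf, sum_add_distrib, sum_ite_eq', mem_range]

variable (R)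

def lamCoeff (p q : ℕ) : R := if p < q then 1 else if q < p then -1 else 0

def omegaCoeff (i j : ℕ) : R :=
  if i % 2 = 0 ∧ j = i + 1 then 1 else if j % 2 = 0 ∧ i = j + 1 then -1 else 0

/- The columns of `phiMatrix` form a symplectic basis of `ker ∂_{2g+1}`; `psiMatrix` takes
coordinates in it after projecting along `altVec`, which spans the radical of `λ_{2g+1}`. -/
def psiCoeff (i p : ℕ) : R :=
  if i % 2 = 0 then (if i < p then -1 else 0) else (if p / 2 = i / 2 then 1 else 0)

def phiCoeff (p i : ℕ) : R :=
  if i % 2 = 0 then (if p = i then 1 else if p = i + 1 then -1 else 0)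
  else (if i ≤ p then (if p % 2 = 0 then -1 else 1) else 0)

def altCoeff (p : ℕ) : R := if p % 2 = 0 then 1 else -1

variable {R}

theorem sum_omegaCoeff_mul (N i : ℕ) (f : ℕ → R) :
    ∑ k ∈ range N, omegaCoeff R i k * f k =
      if i % 2 = 0 then (if i + 1 < N then f (i + 1) else 0)
      else (if i - 1 < N then -f (i - 1) else 0) := by
  rw [Finset.sum_range_eq_ite_add_ite (a := i + 1) (b := i - 1)
    (g := fun k => if i % 2 = 0 then f k else 0)
    (h := fun k => if i % 2 = 1 then -f k else 0) fun k => by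
      unfold omegaCoeff; split_ifs <;> first | omega | ring]
  split_ifs <;> first | omega | ring

theorem sum_omegaCoeff_mul_omegaCoeff {g i : ℕ} (hi : i < 2 * g) (j : ℕ) :
    ∑ k ∈ range (2 * g), omegaCoeff R i k * omegaCoeff R k j = if i = j then -1 else 0 := by
  rw [sum_omegaCoeff_mul]
  unfold omegaCoeff
  split_ifs <;> first | omega | ring

theorem psiCoeff_of_even {i : ℕ} (h : i % 2 = 0) (p : ℕ) :
    psiCoeff R i p = if i < p then -1 else 0 := if_pos h

theorem psiCoeff_of_odd {i : ℕ} (h : i % 2 = 1) (p : ℕ) :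
    psiCoeff R i p = if p / 2 = i / 2 then 1 else 0 := if_neg (by omega)

theorem sum_psiCoeff_mul_omegaCoeff_psiCoeff {g p q : ℕ} (hp : p < 2 * g + 1)
    (hq : q < 2 * g + 1) :
    ∑ i ∈ range (2 * g),
        psiCoeff R i p * ∑ k ∈ range (2 * g), omegaCoeff R i k * psiCoeff R k q =
      lamCoeff R p q := by
  simp only [sum_omegaCoeff_mul]
  rw [Finset.sum_range_eq_ite_add_ite (a := 2 * (q / 2)) (b := 2 * (p / 2) + 1)
    (g := fun i => if i < p ∧ i + 1 < 2 * g then -1 else 0)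
    (h := fun i => if i - 1 < q ∧ i - 1 < 2 * g then 1 else 0) fun i => by
      rcases Nat.mod_two_eq_zero_or_one i with h | h
      · rw [if_pos h, psiCoeff_of_even h, psiCoeff_of_odd (by omega)]
        split_ifs <;> first | omega | ring
      · rw [if_neg (by omega), psiCoeff_of_odd h, psiCoeff_of_even (by omega)]
        split_ifs <;> first | omega | ring]
  unfold lamCoeff
  split_ifs <;> first | omega | ring

theorem sum_phiCoeff_mul_psiCoeff_add_altCoeff {g p q : ℕ} (hp : p < 2 * g + 1)
    (hq : q < 2 * g + 1) :
    ∑ i ∈ range (2 * g), phiCoeff R p i * psiCoeff R i q + altCoeff R p =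
      if p = q then 1 else 0 := by
  rw [Finset.sum_range_eq_ite_add_ite (a := 2 * (p / 2)) (b := 2 * (q / 2) + 1)
    (g := fun i => if i < q then (if p % 2 = 0 then -1 else 1) else 0)
    (h := fun i => if i ≤ p then (if p % 2 = 0 then -1 else 1) else 0) fun i => by
      unfold phiCoeff psiCoeff; split_ifs <;> first | omega | ring]
  unfold altCoeff
  split_ifs <;> first | omega | ring

end Coefficients

section Matrices

variable (R : Type) [CommRing R]
open Matrix

def lamMatrix (n : ℕ) : Matrix (Fin n) (Fin n) R := of fun p q => lamCoeff R p q

def omegaMatrix (n : ℕ) : Matrix (Fin n) (Fin n) R := of fun i j => omegaCoeff R i j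

def psiMatrix (g : ℕ) : Matrix (Fin (2 * g)) (Fin (2 * g + 1)) R := of fun i p => psiCoeff R i p

def phiMatrix (g : ℕ) : Matrix (Fin (2 * g + 1)) (Fin (2 * g)) R := of fun p i => phiCoeff R p i

def altVec (g : ℕ) : Fin (2 * g + 1) → R := fun p => altCoeff R p

theorem lamX_eq_dotProduct_mulVec (n : ℕ) (x y : Fin n → R) :
    lamX R n x y = x ⬝ᵥ (lamMatrix R n *ᵥ y) := by
  simp only [lamX, dotProduct, mulVec, Finset.mul_sum, lamMatrix, lamCoeff, of_apply]
  refine Finset.sum_congr rfl fun i _ => Finset.sum_congr rfl fun j _ => ?_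
  split_ifs <;> ring

theorem omegaH_eq_toBilin' (n : ℕ) (x y : Fin n → R) :
    omegaH R n x y = toBilin' (omegaMatrix R n) x y := by
  simp only [omegaH, toBilin'_apply', dotProduct, mulVec, Finset.mul_sum, omegaMatrix,
    omegaCoeff, of_apply]
  refine Finset.sum_congr rfl fun i _ => Finset.sum_congr rfl fun j _ => ?_
  split_ifs <;> ring

theorem omegaMatrix_mul_self (g : ℕ) : omegaMatrix R (2 * g) * omegaMatrix R (2 * g) = -1 := by
  ext i j
  simp only [mul_apply, omegaMatrix, of_apply]
  rw [Fin.sum_univ_eq_sum_range (fun k => omegaCoeff R i k * omegaCoeff R k j),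
    sum_omegaCoeff_mul_omegaCoeff i.isLt, neg_apply, one_apply]
  simp only [Fin.val_inj]
  split_ifs <;> simp

theorem separatingLeft_toBilin'_omegaMatrix (g : ℕ) :
    (toBilin' (omegaMatrix R (2 * g))).SeparatingLeft := by
  intro x hx
  have hxW : x ᵥ* omegaMatrix R (2 * g) = 0 :=
    dotProduct_eq_zero _ fun y => by simpa [toBilin'_apply', dotProduct_mulVec] using hx y
  calc x = -(x ᵥ* omegaMatrix R (2 * g) ᵥ* omegaMatrix R (2 * g)) := by
        rw [vecMul_vecMul, omegaMatrix_mul_self, vecMul_neg, vecMul_one, neg_neg]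
    _ = 0 := by rw [hxW, zero_vecMul, neg_zero]

theorem psiMatrix_transpose_mul_omegaMatrix_mul_psiMatrix (g : ℕ) :
    (psiMatrix R g)ᵀ * omegaMatrix R (2 * g) * psiMatrix R g = lamMatrix R (2 * g + 1) := by
  ext p q
  rw [Matrix.mul_assoc]
  simp only [mul_apply, transpose_apply, psiMatrix, omegaMatrix, lamMatrix, of_apply]
  rw [Fin.sum_univ_eq_sum_range (fun i => psiCoeff R i p *
      ∑ k : Fin (2 * g), omegaCoeff R i k * psiCoeff R k q)]
  have inner (i : ℕ) : ∑ k : Fin (2 * g), omegaCoeff R i k * psiCoeff R k q =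
      ∑ k ∈ Finset.range (2 * g), omegaCoeff R i k * psiCoeff R k q :=
    Fin.sum_univ_eq_sum_range (fun k => omegaCoeff R i k * psiCoeff R k q) _
  simp only [inner]
  exact sum_psiCoeff_mul_omegaCoeff_psiCoeff p.isLt q.isLt

theorem phiMatrix_mul_psiMatrix_add_vecMulVec (g : ℕ) :
    phiMatrix R g * psiMatrix R g + vecMulVec (altVec R g) 1 = 1 := by
  ext p q
  simp only [Matrix.add_apply, mul_apply, vecMulVec_apply, phiMatrix, psiMatrix, altVec, of_apply,
    Pi.one_apply, mul_one, one_apply, Fin.ext_iff]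
  rw [Fin.sum_univ_eq_sum_range (fun i => phiCoeff R p i * psiCoeff R i q)]
  exact sum_phiCoeff_mul_psiCoeff_add_altCoeff p.isLt q.isLt

theorem lamX_eq_toBilin'_omegaMatrix (g : ℕ) (y y' : Fin (2 * g + 1) → R) :
    lamX R (2 * g + 1) y y' =
      toBilin' (omegaMatrix R (2 * g)) (psiMatrix R g *ᵥ y) (psiMatrix R g *ᵥ y') := by
  rw [lamX_eq_dotProduct_mulVec, ← psiMatrix_transpose_mul_omegaMatrix_mul_psiMatrix,
    toBilin'_apply', ← mulVec_mulVec, ← mulVec_mulVec, dotProduct_mulVec, vecMul_transpose]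

end Matrices

theorem autX_odd_iso_Sp (R : Type) [CommRing R] (g : ℕ) :
    Nonempty (↥(AutX R (2 * g + 1)) ≃* ↥(SpGrp R (2 * g))) := by
  let e := Matrix.mulVecProdDotProductEquiv (phiMatrix_mul_psiMatrix_add_vecMulVec R g) (by simp)
  let ω := Matrix.toBilin' (omegaMatrix R (2 * g))
  have hSp : isometryGroup (fun x y => ω x y) = SpGrp R (2 * g) :=
    congrArg isometryGroup (funext₂ fun x y => (omegaH_eq_toBilin' R _ x y).symm)
  have hlam : ∀ y y', ω (e y).1 (e y').1 = lamX R (2 * g + 1) y y' := fun y y' => by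
    simp [e, ω, lamX_eq_toBilin'_omegaMatrix]
  have hbd : ∀ y, (e y).2 = bdX R (2 * g + 1) y := fun y => by
    simp [e, bdX, one_dotProduct]
  exact ⟨(formAutGroupCongr e hlam hbd).trans <|
    (isometryGroupEquivFormAutGroupProd (separatingLeft_toBilin'_omegaMatrix R g)).symm.trans
      (MulEquiv.subgroupCongr hSp)⟩
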